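/- For every a > 0 and all x, y ∈ ℝ, the local Green kernel satisfies the scaling identity G⁰_a(x,y) = a^{−1/2} · G⁰_1(√a·x, √a·y). -/

import Mathlib

open Real

/-- The paper's local Green kernel for the harmonic-oscillator model of the Kodaira
Laplacian: `G⁰_a(x,y) = √(a/π) e^{−a(x²+y²)/2}
∑_j g_a^{(j)}(x) g_a^{(j)}(y)/((2j+1) a^{j+1} 2^j j!)`, `g_a(s) = exp(−a s²)`. -/
noncomputable def localGreenKernel (a x y : ℝ) : ℝ :=
  Real.sqrt (a / π) * Real.exp (-a * (x ^ 2 + y ^ 2) / 2) *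
    ∑' j : ℕ,
      iteratedDeriv j (fun s : ℝ => Real.exp (-a * s ^ 2)) x *
          iteratedDeriv j (fun s : ℝ => Real.exp (-a * s ^ 2)) y /
        ((2 * j + 1) * a ^ (j + 1) * 2 ^ j * Nat.factorial j)

lemma gauss_contDiff (n : ℕ) : ContDiff ℝ n (fun s : ℝ => Real.exp (-1 * s ^ 2)) :=
  (Real.contDiff_exp.comp ((contDiff_id.pow 2).const_smul (-1 : ℝ))).of_le le_top

lemma gauss_scale (a : ℝ) (ha : 0 < a) (j : ℕ) (x : ℝ) :
    iteratedDeriv j (fun s : ℝ => Real.exp (-a * s ^ 2)) x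
      = Real.sqrt a ^ j *
        iteratedDeriv j (fun s : ℝ => Real.exp (-1 * s ^ 2)) (Real.sqrt a * x) := by
  have hfe : (fun s : ℝ => Real.exp (-a * s ^ 2))
      = fun s : ℝ => Real.exp (-1 * (Real.sqrt a * s) ^ 2) := by
    funext s
    rw [mul_pow, Real.sq_sqrt ha.le]
    ring_nf
  rw [hfe, iteratedDeriv_comp_const_mul (gauss_contDiff j) (Real.sqrt a)]

/-- Self-similarity of the local Green kernel:
`G⁰_a(x,y) = a^{−1/2} G⁰_1(√a x, √a y)` for `a > 0`. -/
theorem localGreenKernel_scaling (a : ℝ) (ha : 0 < a) (x y : ℝ) :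
    localGreenKernel a x y
      = a ^ (-(1 : ℝ) / 2) * localGreenKernel 1 (Real.sqrt a * x) (Real.sqrt a * y) := by
  have hs : (0:ℝ) < Real.sqrt a := Real.sqrt_pos.mpr ha
  have hsq : Real.sqrt a ^ 2 = a := Real.sq_sqrt ha.le
  unfold localGreenKernel
  have hterm : ∀ j : ℕ,
      iteratedDeriv j (fun s : ℝ => Real.exp (-a * s ^ 2)) x *
          iteratedDeriv j (fun s : ℝ => Real.exp (-a * s ^ 2)) y /
        ((2 * j + 1) * a ^ (j + 1) * 2 ^ j * Nat.factorial j)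
      = a⁻¹ * (iteratedDeriv j (fun s : ℝ => Real.exp (-1 * s ^ 2)) (Real.sqrt a * x) *
          iteratedDeriv j (fun s : ℝ => Real.exp (-1 * s ^ 2)) (Real.sqrt a * y) /
        ((2 * j + 1) * 1 ^ (j + 1) * 2 ^ j * Nat.factorial j)) := by
    intro j
    rw [gauss_scale a ha j x, gauss_scale a ha j y]
    have haj : Real.sqrt a ^ j * Real.sqrt a ^ j = a ^ j := by
      rw [← pow_add, ← two_mul, pow_mul, hsq]
    rw [mul_mul_mul_comm, haj]
    have h1 : (0:ℝ) < 2 * j + 1 := by positivity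
    have h2 : (0:ℝ) < (Nat.factorial j : ℝ) := by positivity
    rw [pow_succ]
    field_simp
    ring
  rw [tsum_congr hterm, tsum_mul_left]
  have hexp : Real.exp (-a * (x ^ 2 + y ^ 2) / 2)
      = Real.exp (-1 * ((Real.sqrt a * x) ^ 2 + (Real.sqrt a * y) ^ 2) / 2) := by
    rw [mul_pow, mul_pow, hsq]; ring_nf
  have hrpow : a ^ (-(1 : ℝ) / 2) = (Real.sqrt a)⁻¹ := by
    rw [neg_div, Real.rpow_neg ha.le, ← Real.sqrt_eq_rpow]
  have hcoef : Real.sqrt (a / π) * a⁻¹ = a ^ (-(1 : ℝ) / 2) * Real.sqrt (1 / π) := by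
    have : Real.sqrt (a / π) = Real.sqrt a * Real.sqrt (1 / π) := by
      rw [← Real.sqrt_mul ha.le]; ring_nf
    have hinv : Real.sqrt a * a⁻¹ = (Real.sqrt a)⁻¹ := by
      rw [← hsq]; field_simp; rw [Real.sqrt_sq hs.le]
    rw [this, hrpow, mul_right_comm, hinv]
  rw [hexp]
  calc Real.sqrt (a / π) * Real.exp (-1 * ((Real.sqrt a * x) ^ 2 + (Real.sqrt a * y) ^ 2) / 2) *
        (a⁻¹ * ∑' j : ℕ,
          iteratedDeriv j (fun s : ℝ => Real.exp (-1 * s ^ 2)) (Real.sqrt a * x) *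
            iteratedDeriv j (fun s : ℝ => Real.exp (-1 * s ^ 2)) (Real.sqrt a * y) /
          ((2 * j + 1) * 1 ^ (j + 1) * 2 ^ j * Nat.factorial j))
      = (Real.sqrt (a / π) * a⁻¹) *
        (Real.exp (-1 * ((Real.sqrt a * x) ^ 2 + (Real.sqrt a * y) ^ 2) / 2) *
        ∑' j : ℕ,
          iteratedDeriv j (fun s : ℝ => Real.exp (-1 * s ^ 2)) (Real.sqrt a * x) *
            iteratedDeriv j (fun s : ℝ => Real.exp (-1 * s ^ 2)) (Real.sqrt a * y) /
          ((2 * j + 1) * 1 ^ (j + 1) * 2 ^ j * Nat.factorial j)) := by ring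
    _ = _ := by rw [hcoef]; ring
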